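/- arXiv:2602.20737 — 3 statements merged into one kernel-verified Lean document; each statement's English description precedes it below -/
import Mathlib

section
/- Let R be a complete Noetherian local ring with maximal ideal m and residue field F of odd characteristic p, and let A be a 2×2 matrix over R whose reduction modulo m is the identity matrix. Then A has a square root B in M_2(R) (i.e., B² = A) such that det(B) reduces to 1 in F. -/
/-!
By Hensel's lemma, `det A` has a square root `s ≡ 1` and `trace A + 2 s` a square root `u ≡ 2`
(odd residue characteristic makes `2 * 1` and `2 * 2` units). By Cayley–Hamilton for `2 × 2`
matrices and `s² = det A`, `(A + s)² = (trace A + 2 s) A`, so `B = u⁻¹ (A + s)` squares to `A`;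
and `det (A + s) = s (trace A + 2 s)` gives `det B = s ≡ 1`.
-/

open IsLocalRing Polynomial

theorem HenselianRing.exists_mul_self_eq {R : Type*} [CommRing R] {I : Ideal R}
    [HenselianRing R I] {a r₀ : R} (h : Ideal.Quotient.mk I (r₀ * r₀) = Ideal.Quotient.mk I a)
    (h2 : IsUnit (Ideal.Quotient.mk I (2 * r₀))) :
    ∃ r : R, r * r = a ∧ Ideal.Quotient.mk I r = Ideal.Quotient.mk I r₀ := by
  have hmonic : (X ^ 2 - C a).Monic := monic_X_pow_sub_C a two_ne_zero
  have heval : (X ^ 2 - C a).eval r₀ ∈ I := by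
    simpa [sq] using Ideal.Quotient.eq.mp h
  have hderiv : IsUnit (Ideal.Quotient.mk I ((X ^ 2 - C a).derivative.eval r₀)) := by
    rwa [derivative_sub, derivative_X_pow, derivative_C, sub_zero, eval_mul, eval_C, eval_pow,
      eval_X, pow_one, Nat.cast_ofNat]
  obtain ⟨r, hroot, hr⟩ := HenselianRing.is_henselian (X ^ 2 - C a) hmonic r₀ heval hderiv
  refine ⟨r, ?_, Ideal.Quotient.eq.mpr hr⟩
  simpa [sq, sub_eq_zero] using hroot

namespace Matrix

variable {R : Type*} [CommRing R]

theorem add_smul_one_mul_self_fin_two (A : Matrix (Fin 2) (Fin 2) R) (s : R) :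
    (A + s • 1) * (A + s • 1) = (A.trace + 2 * s) • A + (s * s - A.det) • 1 := by
  ext i j
  fin_cases i <;> fin_cases j <;>
    simp [mul_apply, Fin.sum_univ_two, trace_fin_two, det_fin_two] <;> ring

theorem det_add_smul_one_fin_two (A : Matrix (Fin 2) (Fin 2) R) (s : R) :
    (A + s • 1).det = A.det + s * A.trace + s * s := by
  simp [det_fin_two, trace_fin_two]
  ring

theorem exists_mul_self_eq_and_det_eq_fin_two (A : Matrix (Fin 2) (Fin 2) R) {s : R}
    (hs : s * s = A.det) {u : R} (hu_unit : IsUnit u) (hu : u * u = A.trace + 2 * s) :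
    ∃ B : Matrix (Fin 2) (Fin 2) R, B * B = A ∧ B.det = s := by
  obtain ⟨u, rfl⟩ := hu_unit
  have hinv : (↑u⁻¹ : R) * ↑u⁻¹ * (u * u) = 1 := by
    rw [mul_mul_mul_comm, Units.inv_mul, one_mul]
  refine ⟨(↑u⁻¹ : R) • (A + s • 1), ?_, ?_⟩
  · rw [smul_mul_smul, add_smul_one_mul_self_fin_two, hs, sub_self, zero_smul, add_zero,
      ← hu, smul_smul, hinv, one_smul]
  · have hdet : (A + s • 1).det = s * (u * u) := by
      rw [det_add_smul_one_fin_two, hu, ← hs]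
      ring
    rw [det_smul, Fintype.card_fin, hdet, sq]
    linear_combination s * hinv

end Matrix

theorem two_ne_zero_of_charP_of_odd {K : Type*} [NonAssocSemiring K] [Nontrivial K]
    {p : ℕ} [CharP K p] (hp : Odd p) : (2 : K) ≠ 0 := by
  refine Ring.two_ne_zero ?_
  rw [ringChar.eq K p]
  rintro rfl
  exact Nat.not_odd_iff_even.mpr even_two hp

theorem matrix_sqrt_of_residually_identity_general
    (p : ℕ) (hp : Odd p)
    (R : Type*) [CommRing R] [IsLocalRing R]
    [IsAdicComplete (maximalIdeal R) R]
    [CharP (ResidueField R) p]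
    (A : Matrix (Fin 2) (Fin 2) R)
    (hA : A.map (residue R) = 1) :
    ∃ B : Matrix (Fin 2) (Fin 2) R, B * B = A ∧ residue R B.det = 1 := by
  have h2 : IsUnit (2 : R) :=
    (residue_ne_zero_iff_isUnit 2).mp (by rw [map_ofNat]; exact two_ne_zero_of_charP_of_odd hp)
  have hdet : residue R A.det = 1 := by
    rw [RingHom.map_det, RingHom.mapMatrix_apply, hA, Matrix.det_one]
  have htrace : residue R A.trace = 2 := by
    rw [AddMonoidHom.map_trace, hA, Matrix.trace_one, Fintype.card_fin, Nat.cast_ofNat]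
  obtain ⟨s, hs, hs1 : residue R s = residue R 1⟩ :=
    HenselianRing.exists_mul_self_eq (I := maximalIdeal R) (r₀ := 1)
      (show residue R (1 * 1) = residue R A.det by rw [mul_one, map_one, hdet])
      ((h2.mul isUnit_one).map _)
  obtain ⟨u, hu, hu2 : residue R u = residue R 2⟩ :=
    HenselianRing.exists_mul_self_eq (I := maximalIdeal R) (r₀ := 2)
      (show residue R (2 * 2) = residue R (A.trace + 2 * s) by
        rw [map_add, map_mul, map_mul, htrace, hs1, map_ofNat, map_one]; norm_num)
      ((h2.mul h2).map _)
  have hu_unit : IsUnit u := by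
    rwa [← residue_ne_zero_iff_isUnit, hu2, residue_ne_zero_iff_isUnit]
  obtain ⟨B, hB, hBdet⟩ := A.exists_mul_self_eq_and_det_eq_fin_two hs hu_unit hu
  exact ⟨B, hB, by rw [hBdet, hs1, map_one]⟩

/-- Over a complete Noetherian local ring `R` with residue field of odd
characteristic `p`, any `2 × 2` matrix `A` that is residually the identity has a square root
`B` whose determinant reduces to `1` in the residue field. -/
theorem matrix_sqrt_of_residually_identity
    (p : ℕ) [Fact p.Prime] (hp : Odd p)
    (R : Type*) [CommRing R] [IsLocalRing R] [IsNoetherianRing R]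
    [IsAdicComplete (maximalIdeal R) R]
    [CharP (ResidueField R) p]
    (A : Matrix (Fin 2) (Fin 2) R)
    (hA : A.map (residue R) = 1) :
    ∃ B : Matrix (Fin 2) (Fin 2) R, B * B = A ∧ residue R B.det = 1 :=
  matrix_sqrt_of_residually_identity_general p hp R A hA
end

section
/- Let F be a field of characteristic p ≥ 5 and let G be a subgroup of GSp₄(F) (with respect to the antidiagonal symplectic form J) that contains the image of SL₂(F_p) × SL₂(F_p) under the block embedding (A,B) ↦ diag-block matrix sending (A,B) into GSp₄ in the standard 'induced' position, and also contains the permutation matrix σ swapping e₁↔e₂ and e₃↔e₄. Suppose ⟨·,·⟩₀ is a non-degenerate bilinear pairing on F⁴ satisfying ⟨g v₁, g v₂⟩₀ = λ(g)⟨v₁,v₂⟩₀ for all g ∈ G, where λ is the similitude character (trivial on the embedded SL₂×SL₂ and on σ). Then ⟨·,·⟩₀ is alternating and equal to a scalar multiple of the standard symplectic pairing given by the matrix J with rows (0,0,0,1),(0,0,1,0),(0,-1,0,0),(-1,0,0,0). -/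
/-- The standard antidiagonal symplectic matrix `J` for `GSp₄`. -/
def Jmat (F : Type*) [Field F] : Matrix (Fin 4) (Fin 4) F :=
  !![0, 0, 0, 1; 0, 0, 1, 0; 0, -1, 0, 0; -1, 0, 0, 0]

/-- The block embedding of a pair of `2 × 2` matrices into `4 × 4` matrices, in the
"induced" position: `A` acts on coordinates `(1,4)` and `B` on coordinates `(2,3)`. -/
def blockEmb {F : Type*} [Field F] (A B : Matrix (Fin 2) (Fin 2) F) :
    Matrix (Fin 4) (Fin 4) F :=
  !![A 0 0, 0, 0, A 0 1;
     0, B 0 0, B 0 1, 0;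
     0, B 1 0, B 1 1, 0;
     A 1 0, 0, 0, A 1 1]

/-- The permutation matrix `σ` swapping `e₁ ↔ e₂` and `e₃ ↔ e₄`. -/
def sigmaMat (F : Type*) [Field F] : Matrix (Fin 4) (Fin 4) F :=
  !![0, 1, 0, 0; 1, 0, 0, 0; 0, 0, 0, 1; 0, 0, 1, 0]

/-- The image in `M₄(F)` of an element of `SL₂(𝔽_p) × SL₂(𝔽_p)` under the block embedding,
where entries are transported along `ZMod p → F` (using `char F = p`). -/
noncomputable def blockEmbSL (p : ℕ) [Fact p.Prime] (F : Type*) [Field F] [CharP F p]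
    (A B : Matrix.SpecialLinearGroup (Fin 2) (ZMod p)) : Matrix (Fin 4) (Fin 4) F :=
  blockEmb ((A : Matrix (Fin 2) (Fin 2) (ZMod p)).map (ZMod.castHom (dvd_refl p) F))
    ((B : Matrix (Fin 2) (Fin 2) (ZMod p)).map (ZMod.castHom (dvd_refl p) F))

/-!
If the Gram matrix `M` of a pairing is invariant under a transvection `1 + E_ij` (`i ≠ j`),
then comparing row `j` of `(1 + E_ji) M (1 + E_ij)` with that of `M` shows that row `i` of `M`
vanishes outside column `j`, and then the `(j, j)` entry gives `M j i = -M i j`. The root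
transvections of the two embedded copies of `SL₂(𝔽_p)` are `1 + E_ij` for
`(i, j) ∈ {(1,4), (4,1), (2,3), (3,2)}`, so `M` is `a` on the `(1,4)`-plane and `b` on the
`(2,3)`-plane times the standard alternating form; `σ` exchanges the two planes, so `a = b`.
-/

open Matrix

section Transvection

variable {n R : Type*} [DecidableEq n] [CommRing R]

theorem Matrix.transpose_transvection (i j : n) (c : R) :
    (transvection i j c)ᵀ = transvection j i c := by
  simp [transvection, transpose_single]

theorem Matrix.map_transvection {S : Type*} [CommRing S] (f : R →+* S) (i j : n) (c : R) :
    (transvection i j c).map f = transvection i j (f c) := by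
  simp [transvection, Matrix.map_add, map_single]

variable [Fintype n] {M : Matrix n n R} {i j : n}

theorem apply_eq_zero_of_transvection_invariant
    (h : (transvection i j (1 : R))ᵀ * M * transvection i j 1 = M) {b : n} (hb : b ≠ j) :
    M i b = 0 := by
  have e := congrFun (congrFun h j) b
  rw [transpose_transvection, mul_transvection_apply_of_ne _ _ _ _ hb,
    transvection_mul_apply_same] at e
  simpa using e

theorem apply_swap_eq_neg_of_transvection_invariant
    (h : (transvection i j (1 : R))ᵀ * M * transvection i j 1 = M) (hij : i ≠ j) :
    M j i = -M i j := by
  have e := congrFun (congrFun h j) j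
  rw [transpose_transvection, mul_transvection_apply_same, transvection_mul_apply_same,
    transvection_mul_apply_same, apply_eq_zero_of_transvection_invariant h hij] at e
  linear_combination e

end Transvection

section BlockEmbedding

variable {F : Type*} [Field F]

theorem blockEmb_transvection_one (i j : Fin 2) (c : F) :
    blockEmb (transvection i j c) 1 = transvection (![0, 3] i) (![0, 3] j) c := by
  fin_cases i <;> fin_cases j <;> ext a b <;> fin_cases a <;> fin_cases b <;>
    simp [blockEmb, transvection, one_apply]

theorem blockEmb_one_transvection (i j : Fin 2) (c : F) :
    blockEmb 1 (transvection i j c) = transvection (![1, 2] i) (![1, 2] j) c := by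
  fin_cases i <;> fin_cases j <;> ext a b <;> fin_cases a <;> fin_cases b <;>
    simp [blockEmb, transvection, one_apply]

variable (p : ℕ) [Fact p.Prime] (F) [CharP F p] {i j : Fin 2} (hij : i ≠ j) (c : ZMod p)

theorem blockEmbSL_transvection_one :
    blockEmbSL p F (SpecialLinearGroup.transvection hij c) 1
      = transvection (![0, 3] i) (![0, 3] j) (ZMod.castHom (dvd_refl p) F c) := by
  simp [blockEmbSL, SpecialLinearGroup.transvection, map_transvection, Matrix.map_one,
    blockEmb_transvection_one]

theorem blockEmbSL_one_transvection :
    blockEmbSL p F 1 (SpecialLinearGroup.transvection hij c)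
      = transvection (![1, 2] i) (![1, 2] j) (ZMod.castHom (dvd_refl p) F c) := by
  simp [blockEmbSL, SpecialLinearGroup.transvection, map_transvection, Matrix.map_one,
    blockEmb_one_transvection]

end BlockEmbedding

section Symplectic

variable {F : Type*} [Field F]

theorem Jmat_transpose : (Jmat F)ᵀ = -Jmat F := by
  ext a b; fin_cases a <;> fin_cases b <;> simp [Jmat]

theorem eq_smul_Jmat_of_invariant {M : Matrix (Fin 4) (Fin 4) F}
    (h03 : (transvection 0 3 (1 : F))ᵀ * M * transvection 0 3 1 = M)
    (h30 : (transvection 3 0 (1 : F))ᵀ * M * transvection 3 0 1 = M)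
    (h12 : (transvection 1 2 (1 : F))ᵀ * M * transvection 1 2 1 = M)
    (h21 : (transvection 2 1 (1 : F))ᵀ * M * transvection 2 1 1 = M)
    (hσ : (sigmaMat F)ᵀ * M * sigmaMat F = M) :
    M = M 0 3 • Jmat F := by
  have hM12 : M 1 2 = M 0 3 := by
    simpa [sigmaMat, mul_apply, Fin.sum_univ_four] using congrFun (congrFun hσ 0) 3
  have hM30 := apply_swap_eq_neg_of_transvection_invariant h03 (by decide)
  have hM21 := apply_swap_eq_neg_of_transvection_invariant h12 (by decide)
  ext a b
  fin_cases a <;> fin_cases b <;>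
    simp [Jmat, hM12, hM30, hM21, apply_eq_zero_of_transvection_invariant h03,
      apply_eq_zero_of_transvection_invariant h30, apply_eq_zero_of_transvection_invariant h12,
      apply_eq_zero_of_transvection_invariant h21]

end Symplectic

theorem pairing_eq_scalar_symplectic_general
    (p : ℕ) [Fact p.Prime]
    (F : Type*) [Field F] [CharP F p]
    (M0 : Matrix (Fin 4) (Fin 4) F)
    (G : Set (Matrix (Fin 4) (Fin 4) F)) (lam : Matrix (Fin 4) (Fin 4) F → Fˣ)
    (hpair : ∀ g ∈ G, g.transpose * M0 * g = (lam g : F) • M0)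
    (hSL : ∀ A B : Matrix.SpecialLinearGroup (Fin 2) (ZMod p),
      blockEmbSL p F A B ∈ G ∧ (lam (blockEmbSL p F A B) : F) = 1)
    (hsig : sigmaMat F ∈ G ∧ (lam (sigmaMat F) : F) = 1) :
    M0.transpose = -M0 ∧ ∃ c : F, M0 = c • Jmat F := by
  have hSL_inv (A B) : (blockEmbSL p F A B)ᵀ * M0 * blockEmbSL p F A B = M0 := by
    rw [hpair _ (hSL A B).1, (hSL A B).2, one_smul]
  have h01 : (0 : Fin 2) ≠ 1 := by decide
  have hM : M0 = M0 0 3 • Jmat F := by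
    refine eq_smul_Jmat_of_invariant ?_ ?_ ?_ ?_ ?_
    · simpa [blockEmbSL_transvection_one] using
        hSL_inv (SpecialLinearGroup.transvection h01 1) 1
    · simpa [blockEmbSL_transvection_one] using
        hSL_inv (SpecialLinearGroup.transvection h01.symm 1) 1
    · simpa [blockEmbSL_one_transvection] using
        hSL_inv 1 (SpecialLinearGroup.transvection h01 1)
    · simpa [blockEmbSL_one_transvection] using
        hSL_inv 1 (SpecialLinearGroup.transvection h01.symm 1)
    · rw [hpair _ hsig.1, hsig.2, one_smul]
  exact ⟨by rw [hM, transpose_smul, Jmat_transpose, smul_neg], _, hM⟩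

/-- Let `F` have characteristic `p ≥ 5` and let `G ⊆ M₄(F)` (a set of
similitudes) contain the block embedding of `SL₂(𝔽_p) × SL₂(𝔽_p)` and the swap matrix `σ`,
with the similitude character `lam` trivial on those elements.  Any non-degenerate bilinear
pairing `M0` with `gᵀ M0 g = lam(g) • M0` for all `g ∈ G` is alternating and is a scalar
multiple of the standard symplectic pairing `J`. -/
theorem pairing_eq_scalar_symplectic
    (p : ℕ) [Fact p.Prime] (hp : 5 ≤ p)
    (F : Type*) [Field F] [CharP F p]
    (M0 : Matrix (Fin 4) (Fin 4) F) (hM0 : IsUnit M0.det)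
    (G : Set (Matrix (Fin 4) (Fin 4) F)) (lam : Matrix (Fin 4) (Fin 4) F → Fˣ)
    (hpair : ∀ g ∈ G, g.transpose * M0 * g = (lam g : F) • M0)
    (hSL : ∀ A B : Matrix.SpecialLinearGroup (Fin 2) (ZMod p),
      blockEmbSL p F A B ∈ G ∧ (lam (blockEmbSL p F A B) : F) = 1)
    (hsig : sigmaMat F ∈ G ∧ (lam (sigmaMat F) : F) = 1) :
    M0.transpose = -M0 ∧ ∃ c : F, M0 = c • Jmat F :=
  pairing_eq_scalar_symplectic_general p F M0 G lam hpair hSL hsig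
end

section
/- Let O′ be the ring of integers in a finite extension of Q_p, let ρ(g_ℓ) ∈ GL₄(O′) be a matrix whose only eigenvalue is 1 and which is not the identity, and suppose there is X ∈ GL₄(O′) with X·ρ(g_ℓ)·X⁻¹ = ρ(g_ℓ)^ℓ. If the Jordan canonical form of ρ(g_ℓ) over an algebraic closure has a Jordan block of size ≥ 3, then the eigenvalues a,b,c,d of X (over an algebraic closure) satisfy, after reordering, a/b = b/c = ℓ; consequently X² has at least three residually distinct eigenvalues provided p ∤ ℓ⁴−1. -/
/-!
Write `N = ρ - 1`. By the binomial theorem `ρ ^ ℓ - 1 = ℓ • N + N ^ 2 * W` with `W` commuting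
with `N`, so `X N X⁻¹ = U N` where `U = ℓ + N W` is a unit commuting with `N`. Hence `X`
preserves every `ker Nᵏ`, and `N` sends a vector that is a `t`-eigenvector of `X` modulo
`ker N^(k+1)` to an `ℓ t`-eigenvector modulo `ker Nᵏ`. Starting from an eigenvector of `X` on
`V ⧸ ker Nᵐ`, where `m ≥ 2` is maximal with `Nᵐ ≠ 0`, and applying `N` repeatedly yields the
eigenvalues `t, ℓ t, ℓ² t` of `X`; they are distinct since `X` is invertible and `ℓ ≥ 2`.
The ratios of the squares are `ℓ²` and `ℓ⁴`, which are not `1` modulo `p`.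
-/

open Polynomial

theorem exists_one_add_pow_eq {A : Type*} [Ring A] (N : A) (n : ℕ) :
    ∃ W : A, Commute N W ∧ (1 + N) ^ n = 1 + n • N + N ^ 2 * W := by
  induction n with
  | zero => exact ⟨0, Commute.zero_right N, by simp⟩
  | succ n ih =>
    obtain ⟨W, hNW, hW⟩ := ih
    refine ⟨n • 1 + W + W * N, ?_, ?_⟩
    · exact ((Commute.one_right N).smul_right n |>.add_right hNW).add_right (hNW.mul_right rfl)
    · rw [pow_succ, hW]
      noncomm_ring
      rw [succ_nsmul]
      abel

namespace Module.End

variable {K V : Type*} [Field K] [AddCommGroup V] [Module K V]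

theorem hasEigenvalue_of_sub_smul_mem [FiniteDimensional K V] {f : End K V}
    {F : Submodule K V} (hF : F ≤ F.comap f) {t : K} {v : V} (hv : v ∉ F)
    (h : f v - t • v ∈ F) : f.HasEigenvalue t := by
  by_contra ht
  set g := f - t • (1 : End K V)
  have hg : Function.Injective g := by
    rw [← LinearMap.ker_eq_bot, ← eigenspace_def]
    simpa [hasEigenvalue_iff] using ht
  have hgF : F ≤ F.comap g := fun x hx => F.sub_mem (hF hx) (F.smul_mem t hx)
  -- `g` restricts to an injective, hence surjective, endomorphism of `F`
  have hgF_inj : Function.Injective (g.restrict hgF) :=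
    fun x y hxy => Subtype.ext (hg (congrArg Subtype.val hxy))
  obtain ⟨e, he⟩ := LinearMap.injective_iff_surjective.mp hgF_inj ⟨g v, by simpa [g] using h⟩
  exact hv (hg (congrArg Subtype.val he) ▸ e.2)

theorem exists_sub_smul_mem_of_ne_top [FiniteDimensional K V] [IsAlgClosed K] {f : End K V}
    {F : Submodule K V} (hF : F ≤ F.comap f) (hF_ne : F ≠ ⊤) :
    ∃ (t : K) (v : V), v ∉ F ∧ f v - t • v ∈ F := by
  have : Nontrivial (V ⧸ F) := Submodule.Quotient.nontrivial_iff.mpr hF_ne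
  obtain ⟨t, ht⟩ := exists_eigenvalue (F.mapQ F f hF)
  obtain ⟨q, hq⟩ := ht.exists_hasEigenvector
  obtain ⟨v, rfl⟩ := F.mkQ_surjective q
  refine ⟨t, v, fun hv => hq.2 ((Submodule.Quotient.mk_eq_zero F).mpr hv), ?_⟩
  rw [← Submodule.Quotient.eq]
  exact mem_eigenspace_iff.mp hq.1

section FrobeniusRelation

variable {f N W : End K V} {c : K}

theorem ker_pow_le_comap_of_mul_eq (hf : f * N = (c • N + N ^ 2 * W) * f) (hNW : Commute N W)
    (hc : c ≠ 0) (hN : IsNilpotent N) (k : ℕ) :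
    LinearMap.ker (N ^ k) ≤ (LinearMap.ker (N ^ k)).comap f := by
  set U := algebraMap K (End K V) c + N * W
  have hUN : Commute U N :=
    (Algebra.commute_algebraMap_left c N).add_left ((Commute.refl N).mul_left hNW.symm)
  have hU : IsUnit U :=
    (hNW.isNilpotent_mul_right hN).isUnit_add_left_of_commute (hc.isUnit.map _)
      (Algebra.commute_algebraMap_right c _)
  have hfU : f * N = (U * N) * f := by
    rw [hf, add_mul (algebraMap K _ c), ← Algebra.smul_def, mul_assoc N, ← hNW.eq, ← mul_assoc,
      ← sq]
  have hfk : f * N ^ k = U ^ k * N ^ k * f := by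
    rw [← hUN.mul_pow]; exact SemiconjBy.pow_right hfU k
  intro x hx
  have := LinearMap.congr_fun hfk x
  simp only [LinearMap.mem_ker, Submodule.mem_comap, Module.End.mul_apply] at hx ⊢ this
  rw [hx, map_zero] at this
  exact ((Module.End.isUnit_iff _).mp (hU.pow k)).injective (by rw [← this, map_zero])

theorem pow_apply_sub_smul_apply_eq_zero (hf : f * N = (c • N + N ^ 2 * W) * f)
    (hNW : Commute N W) {k : ℕ} {t : K} {v : V} (hv : (N ^ (k + 2)) v = 0)
    (he : (N ^ (k + 1)) (f v - t • v) = 0) :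
    (N ^ k) (f (N v) - (c * t) • N v) = 0 := by
  set e := f v - t • v
  have hfNv : f (N v) = (c • N + N ^ 2 * W) (t • v + e) := by
    rw [← Module.End.mul_apply, hf, Module.End.mul_apply, add_sub_cancel]
  have hWk : N ^ k * (N ^ 2 * W) = W * N ^ (k + 2) := by
    rw [← mul_assoc, ← pow_add, (hNW.symm.pow_right _).eq]
  have hk1 : N ^ k * (c • N) = c • N ^ (k + 1) := by rw [mul_smul_comm, pow_succ]
  calc (N ^ k) (f (N v) - (c * t) • N v)
      = t • (N ^ k * (N ^ 2 * W)) v + (N ^ k * (c • N + N ^ 2 * W)) e := by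
        rw [hfNv]
        simp only [map_add, map_smul, map_sub, LinearMap.add_apply, LinearMap.smul_apply,
          Module.End.mul_apply]
        module
    _ = 0 := by
        rw [hWk, mul_add, hk1, hWk]
        have he' : (N ^ (k + 2)) e = 0 := by rw [pow_succ', Module.End.mul_apply, he, map_zero]
        simp only [LinearMap.add_apply, LinearMap.smul_apply, Module.End.mul_apply, hv, he, he',
          map_zero, smul_zero, add_zero]

theorem pow_apply_sub_smul_pow_apply_eq_zero (hf : f * N = (c • N + N ^ 2 * W) * f)
    (hNW : Commute N W) {i j : ℕ} {t : K} {v : V} (hv : (N ^ (i + j + 1)) v = 0)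
    (he : (N ^ (i + j)) (f v - t • v) = 0) :
    (N ^ i) (f ((N ^ j) v) - (c ^ j * t) • (N ^ j) v) = 0 := by
  induction j generalizing t v with
  | zero => simpa using he
  | succ j ih =>
    have hNv : (N ^ (i + j + 1)) (N v) = 0 := by
      rw [← Module.End.mul_apply, ← pow_succ]; exact hv
    have hNe := pow_apply_sub_smul_apply_eq_zero hf hNW (k := i + j) hv he
    rw [pow_succ N, Module.End.mul_apply, pow_succ c, mul_assoc]
    exact ih hNv hNe

theorem exists_hasEigenvalue_pow_mul [FiniteDimensional K V] [IsAlgClosed K]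
    (hf : f * N = (c • N + N ^ 2 * W) * f) (hNW : Commute N W) (hc : c ≠ 0)
    (hN : IsNilpotent N) {k : ℕ} (hk : N ^ k ≠ 0) :
    ∃ t : K, ∀ j ≤ k, f.HasEigenvalue (c ^ j * t) := by
  have : Nontrivial (End K V) := nontrivial_of_ne _ _ hk
  obtain ⟨m, hm, hm_ne⟩ : ∃ m, N ^ (m + 1) = 0 ∧ N ^ m ≠ 0 :=
    ⟨_, (nilpotencyClass_eq_succ_iff.mp
      (Nat.succ_pred_eq_of_pos (pos_nilpotencyClass_iff.mpr hN)).symm).1,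
      pow_pred_nilpotencyClass hN⟩
  have hkm : k ≤ m := by
    by_contra h
    exact hk (pow_eq_zero_of_le (by omega) hm)
  obtain ⟨t, v, hv, hfv⟩ := exists_sub_smul_mem_of_ne_top
    (ker_pow_le_comap_of_mul_eq hf hNW hc hN m) (fun h => hm_ne (LinearMap.ker_eq_top.mp h))
  refine ⟨t, fun j hj => ?_⟩
  obtain ⟨i, rfl⟩ : ∃ i, m = i + j := ⟨m - j, by omega⟩
  refine hasEigenvalue_of_sub_smul_mem (ker_pow_le_comap_of_mul_eq hf hNW hc hN i)
    (v := (N ^ j) v) ?_ (pow_apply_sub_smul_pow_apply_eq_zero hf hNW (LinearMap.congr_fun hm v) hfv)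
  rwa [LinearMap.mem_ker, ← Module.End.mul_apply, ← pow_add]

end FrobeniusRelation

end Module.End

theorem Matrix.exists_isRoot_charpoly_pow_mul {K ι : Type*} [Field K] [IsAlgClosed K]
    [Fintype ι] [DecidableEq ι] {ρ X : Matrix ι ι K} {ℓ : ℕ} (hℓ : (ℓ : K) ≠ 0)
    (hrel : X * ρ = ρ ^ ℓ * X) (hρ : IsNilpotent (ρ - 1)) {k : ℕ} (hk : (ρ - 1) ^ k ≠ 0) :
    ∃ t : K, ∀ j ≤ k, X.charpoly.IsRoot ((ℓ : K) ^ j * t) := by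
  obtain ⟨W, hNW, hW⟩ := exists_one_add_pow_eq (ρ - 1) ℓ
  rw [add_sub_cancel] at hW
  have hXN : X * (ρ - 1) = (ℓ • (ρ - 1) + (ρ - 1) ^ 2 * W) * X := by
    rw [mul_sub, hrel, hW, mul_one, add_assoc, add_mul, one_mul, add_sub_cancel_left]
  set e := Matrix.toLinAlgEquiv' (R := K) (n := ι)
  have hf : e X * e (ρ - 1) = ((ℓ : K) • e (ρ - 1) + e (ρ - 1) ^ 2 * e W) * e X := by
    simpa only [map_mul, map_add, map_pow, map_nsmul, Nat.cast_smul_eq_nsmul] using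
      congrArg e hXN
  obtain ⟨t, ht⟩ := Module.End.exists_hasEigenvalue_pow_mul hf (hNW.map e) hℓ (hρ.map e)
    (by rwa [← map_pow, map_ne_zero_iff _ e.injective])
  refine ⟨t, fun j hj => ?_⟩
  rw [← Matrix.charpoly_toLin', ← Module.End.hasEigenvalue_iff_isRoot_charpoly]
  exact ht j hj

theorem Polynomial.Monic.exists_eq_prod_mul_X_sub_C {R : Type*} [CommRing R] [IsDomain R]
    {P : R[X]} (hP : P.Monic) {s : Multiset R} (hs : s ≤ P.roots)
    (hdeg : P.natDegree = Multiset.card s + 1) :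
    ∃ d : R, P = (s.map fun a => X - C a).prod * (X - C d) := by
  obtain ⟨Q, hQ⟩ := (Multiset.prod_X_sub_C_dvd_iff_le_roots hP.ne_zero s).mpr hs
  have hs_monic : (s.map fun a => X - C a).prod.Monic :=
    monic_multiset_prod_of_monic _ _ fun a _ => monic_X_sub_C a
  have hQ_monic : Q.Monic := hs_monic.of_mul_monic_left (hQ ▸ hP)
  have hQ_deg : Q.natDegree = 1 := by
    have := congrArg natDegree hQ
    rw [hs_monic.natDegree_mul hQ_monic, natDegree_multiset_prod_X_sub_C_eq_card] at this
    omega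
  refine ⟨-Q.coeff 0, hQ.trans ?_⟩
  rw [C_neg, sub_neg_eq_add, ← hQ_monic.eq_X_add_C hQ_deg]

theorem Polynomial.Monic.exists_eq_of_isRoot_pow_mul {K : Type*} [Field K] [CharZero K]
    {P : K[X]} (hP : P.Monic) (hdeg : P.natDegree = 4) {ℓ : ℕ} (hℓ : 2 ≤ ℓ) {t : K} (ht0 : t ≠ 0)
    (ht : ∀ j ≤ 2, P.IsRoot ((ℓ : K) ^ j * t)) :
    ∃ d : K, P = (X - C ((ℓ : K) ^ 2 * t)) * (X - C ((ℓ : K) * t)) * (X - C t) * (X - C d) := by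
  have hinj : Function.Injective fun j : ℕ => (ℓ : K) ^ j * t := fun i j hij =>
    Nat.pow_right_injective hℓ (by exact_mod_cast mul_right_cancel₀ ht0 hij)
  have hroots : (Multiset.range 3).map (fun j => (ℓ : K) ^ j * t) ≤ P.roots := by
    refine (Multiset.le_iff_subset ((Multiset.nodup_range 3).map hinj)).mpr fun x hx => ?_
    obtain ⟨j, hj, rfl⟩ := Multiset.mem_map.mp hx
    exact (mem_roots hP.ne_zero).mpr (ht j (Nat.le_of_lt_succ (Multiset.mem_range.mp hj)))
  obtain ⟨d, hd⟩ := hP.exists_eq_prod_mul_X_sub_C hroots (by simp [hdeg])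
  refine ⟨d, hd.trans ?_⟩
  simp only [Multiset.range_succ, Multiset.range_zero, Multiset.map_cons, Multiset.map_zero,
    Multiset.prod_cons, Multiset.prod_zero, pow_zero, pow_one, one_mul, mul_one]
  ring

theorem map_ne_of_eq_natCast_mul {R k : Type*} [Ring R] [Ring k] [IsDomain k] (p : ℕ) [CharP k p]
    (ψ : R →+* k) {x y : R} {n : ℕ} (hxy : x = n * y) (hy : ψ y ≠ 0) (hn : ¬ p ∣ n - 1) :
    ψ x ≠ ψ y := by
  intro h
  rw [hxy, map_mul, map_natCast] at h
  have h1 : (n : k) = ((1 : ℕ) : k) := by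
    rw [Nat.cast_one]; exact mul_right_cancel₀ hy (h.trans (one_mul _).symm)
  have hn1 : 1 ≤ n := Nat.one_le_iff_ne_zero.mpr (by rintro rfl; simp at hn)
  exact hn ((Nat.modEq_iff_dvd' hn1).mp ((CharP.natCast_eq_natCast k p).mp h1).symm)

theorem frobenius_eigenvalue_ratios_of_large_jordan_block_general
    (p ℓ : ℕ) (hℓ : ℓ.Prime) (hpl : ¬ (p ∣ ℓ ^ 4 - 1))
    (K : Type*) [Field K] [IsAlgClosed K] [CharZero K]
    (ρ X : Matrix (Fin 4) (Fin 4) K)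
    (hchar : ρ.charpoly = (Polynomial.X - 1) ^ 4)
    (hJordan : (ρ - 1) ^ 2 ≠ 0)
    (hX : IsUnit X.det)
    (hrel : X * ρ = ρ ^ ℓ * X) :
    ∃ a b c d : K,
      X.charpoly = (Polynomial.X - C a) * (Polynomial.X - C b) *
        (Polynomial.X - C c) * (Polynomial.X - C d) ∧
      a = (ℓ : K) * b ∧ b = (ℓ : K) * c ∧
      ∀ (A : Subring K) (k : Type) (_ : Field k) (_ : CharP k p) (ψ : A →+* k)
        (ha : a ^ 2 ∈ A) (hb : b ^ 2 ∈ A) (hc : c ^ 2 ∈ A),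
        ψ ⟨a ^ 2, ha⟩ ≠ 0 → ψ ⟨b ^ 2, hb⟩ ≠ 0 → ψ ⟨c ^ 2, hc⟩ ≠ 0 →
          ψ ⟨a ^ 2, ha⟩ ≠ ψ ⟨b ^ 2, hb⟩ ∧ ψ ⟨a ^ 2, ha⟩ ≠ ψ ⟨c ^ 2, hc⟩ ∧
            ψ ⟨b ^ 2, hb⟩ ≠ ψ ⟨c ^ 2, hc⟩ := by
  have hnil : IsNilpotent (ρ - 1) := ⟨4, by simpa [hchar] using Matrix.aeval_self_charpoly ρ⟩
  obtain ⟨t, ht⟩ := Matrix.exists_isRoot_charpoly_pow_mul (Nat.cast_ne_zero.mpr hℓ.ne_zero)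
    hrel hnil hJordan
  have ht0 : t ≠ 0 := fun h0 => (spectrum.zero_mem_iff K).mp
    (Matrix.mem_spectrum_of_isRoot_charpoly (by simpa [h0] using ht 0 (Nat.zero_le _)))
    ((Matrix.isUnit_iff_isUnit_det X).mpr hX)
  obtain ⟨d, hd⟩ := X.charpoly_monic.exists_eq_of_isRoot_pow_mul
    (by simp [Matrix.charpoly_natDegree_eq_dim]) hℓ.two_le ht0 ht
  refine ⟨ℓ ^ 2 * t, ℓ * t, t, d, hd, by ring, by ring, ?_⟩
  intro A k _ _ ψ ha hb hc _ hb0 hc0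
  have hpl2 : ¬ p ∣ ℓ ^ 2 - 1 := fun h => hpl (h.trans <| by
    rw [show ℓ ^ 4 = (ℓ ^ 2) ^ 2 by ring]; simpa using Nat.sub_dvd_pow_sub_pow (ℓ ^ 2) 1 2)
  exact ⟨map_ne_of_eq_natCast_mul p ψ (n := ℓ ^ 2) (Subtype.ext (by push_cast; ring)) hb0 hpl2,
    map_ne_of_eq_natCast_mul p ψ (n := ℓ ^ 4) (Subtype.ext (by push_cast; ring)) hc0 hpl,
    map_ne_of_eq_natCast_mul p ψ (n := ℓ ^ 2) (Subtype.ext (by push_cast; ring)) hc0 hpl2⟩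

/-- Let `ρ(g_ℓ)` be a `4 × 4` matrix (over an algebraically closed field `K`
of characteristic zero, the algebraic closure of the fraction field of `O′`) whose only
eigenvalue is `1` and which is not the identity, with `X ρ(g_ℓ) X⁻¹ = ρ(g_ℓ)^ℓ` for an
invertible `X`.  If the Jordan form of `ρ(g_ℓ)` has a block of size `≥ 3` (i.e.
`(ρ(g_ℓ) − 1)² ≠ 0`), then the eigenvalues `a, b, c, d` of `X` satisfy, after reordering,
`a/b = b/c = ℓ`; consequently the eigenvalues `a², b², c²` of `X²` are residually pairwise
distinct (with respect to any residue map to a field of characteristic `p`, on which they are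
nonzero), provided `p ∤ ℓ⁴ − 1`. -/
theorem frobenius_eigenvalue_ratios_of_large_jordan_block
    (p ℓ : ℕ) [Fact p.Prime] (hℓ : ℓ.Prime) (hℓp : ℓ ≠ p) (hpl : ¬ (p ∣ ℓ ^ 4 - 1))
    (K : Type*) [Field K] [IsAlgClosed K] [CharZero K]
    (ρ X : Matrix (Fin 4) (Fin 4) K)
    (hchar : ρ.charpoly = (Polynomial.X - 1) ^ 4)
    (hne : ρ ≠ 1)
    (hJordan : (ρ - 1) ^ 2 ≠ 0)
    (hX : IsUnit X.det)
    (hrel : X * ρ = ρ ^ ℓ * X) :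
    ∃ a b c d : K,
      X.charpoly = (Polynomial.X - C a) * (Polynomial.X - C b) *
        (Polynomial.X - C c) * (Polynomial.X - C d) ∧
      a = (ℓ : K) * b ∧ b = (ℓ : K) * c ∧
      ∀ (A : Subring K) (k : Type) (_ : Field k) (_ : CharP k p) (ψ : A →+* k)
        (ha : a ^ 2 ∈ A) (hb : b ^ 2 ∈ A) (hc : c ^ 2 ∈ A),
        ψ ⟨a ^ 2, ha⟩ ≠ 0 → ψ ⟨b ^ 2, hb⟩ ≠ 0 → ψ ⟨c ^ 2, hc⟩ ≠ 0 →
          ψ ⟨a ^ 2, ha⟩ ≠ ψ ⟨b ^ 2, hb⟩ ∧ ψ ⟨a ^ 2, ha⟩ ≠ ψ ⟨c ^ 2, hc⟩ ∧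
            ψ ⟨b ^ 2, hb⟩ ≠ ψ ⟨c ^ 2, hc⟩ :=
  frobenius_eigenvalue_ratios_of_large_jordan_block_general p ℓ hℓ hpl K ρ X hchar hJordan hX hrel
end
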